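/- For every even n ≥ 2, the map sending a partition λ of n (in which every odd part exceeds every even part) to λ ∪ {1} if λ has no even parts, and otherwise to the partition obtained by adding 1 to the largest even part of λ, is a bijection onto the set of partitions of n+1 in which every odd part exceeds every even part. -/

import Mathlib

/-!
Write `e` for the largest even part of `λ`, with `e = 0` when there is none. As `0` is never a
part, `ψ` is uniformly "replace the part `e` by `e + 1`" (for `e = 0` there is nothing to
remove). Every odd part of `λ` exceeds `e`, so `e + 1` is the smallest odd part of `ψ λ`. Hence
`ψ` is undone by lowering the smallest odd part `o` to `o - 1` (dropping it when `o = 1`); a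
partition of the odd number `n + 1` always has an odd part to lower.
-/

/-- Every odd part is greater than every even part. -/
def oddAbove (l : Multiset ℕ) : Prop :=
  ∀ a ∈ l, ∀ b ∈ l, Odd a → Even b → b < a

/-- Every even part is greater than every odd part. -/
def evenAbove (l : Multiset ℕ) : Prop :=
  ∀ a ∈ l, ∀ b ∈ l, Even a → Odd b → b < a

/-- The odd parts are distinct. -/
def oddDistinct (l : Multiset ℕ) : Prop :=
  ∀ a, Odd a → l.count a ≤ 1

/-- The even parts are distinct. -/
def evenDistinct (l : Multiset ℕ) : Prop :=
  ∀ a, Even a → l.count a ≤ 1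

/-- The number of partitions of `n` whose multiset of parts satisfies `P`. -/
noncomputable def pcount (n : ℕ) (P : Multiset ℕ → Prop) : ℕ :=
  Nat.card {p : Nat.Partition n // P p.parts}

open Multiset

lemma Multiset.sup_mem_of_ne_zero {α : Type*} [LinearOrder α] [OrderBot α] {s : Multiset α}
    (hs : s ≠ 0) : s.sup ∈ s := by
  simpa [Finset.sup_def] using Finset.exists_mem_eq_sup s.toFinset (by simpa using hs) id

lemma Multiset.exists_odd_mem_of_odd_sum {s : Multiset ℕ} (hs : Odd s.sum) :
    ∃ a ∈ s, Odd a := by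
  by_contra! h
  simp only [Nat.not_odd_iff_even] at h
  exact Nat.not_odd_iff_even.2 (sum_induction Even s (fun _ _ => Even.add) Even.zero h) hs

lemma Nat.Partition.exists_odd_mem {m : ℕ} (p : m.Partition) (hm : Odd m) :
    ∃ a ∈ p.parts, Odd a :=
  exists_odd_mem_of_odd_sum (by rwa [p.parts_sum])

def maxEven (l : Multiset ℕ) : ℕ := (l.filter Even).sup

noncomputable def minOdd (l : Multiset ℕ) : ℕ := sInf {a | a ∈ l ∧ Odd a}

def raiseMaxEven (l : Multiset ℕ) : Multiset ℕ := (maxEven l + 1) ::ₘ l.erase (maxEven l)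

noncomputable def lowerMinOdd (l : Multiset ℕ) : Multiset ℕ :=
  if minOdd l = 1 then l.erase 1 else (minOdd l - 1) ::ₘ l.erase (minOdd l)

variable {l : Multiset ℕ} {a b c : ℕ}

section maxEven

lemma le_maxEven (hb : b ∈ l) (hev : Even b) : b ≤ maxEven l :=
  le_sup (mem_filter.2 ⟨hb, hev⟩)

lemma maxEven_le (h : ∀ b ∈ l, Even b → b ≤ c) : maxEven l ≤ c :=
  Multiset.sup_le.2 fun b hb => h b (mem_filter.1 hb).1 (mem_filter.1 hb).2

lemma maxEven_mem_filter (h : maxEven l ≠ 0) : maxEven l ∈ l.filter Even :=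
  sup_mem_of_ne_zero fun hl => h (by rw [maxEven, hl, sup_zero]; rfl)

lemma even_maxEven (l : Multiset ℕ) : Even (maxEven l) := by
  by_cases h : maxEven l = 0
  · exact h ▸ Even.zero
  · exact (mem_filter.1 (maxEven_mem_filter h)).2

lemma maxEven_eq (hb : b ∈ l) (hev : Even b) (hmax : ∀ c ∈ l, Even c → c ≤ b) :
    maxEven l = b :=
  le_antisymm (maxEven_le hmax) (le_maxEven hb hev)

lemma maxEven_eq_zero_of_forall_odd (h : ∀ a ∈ l, Odd a) : maxEven l = 0 :=
  Nat.le_zero.1 <| maxEven_le fun b hb hev => absurd hev (Nat.not_even_iff_odd.2 (h b hb))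

lemma maxEven_lt_of_odd (hl : oddAbove l) (ha : a ∈ l) (hodd : Odd a) : maxEven l < a := by
  by_cases h : maxEven l = 0
  · exact h ▸ hodd.pos
  · obtain ⟨hmem, hev⟩ := mem_filter.1 (maxEven_mem_filter h)
    exact hl a ha _ hmem hodd hev

lemma maxEven_add_sum_erase (l : Multiset ℕ) : maxEven l + (l.erase (maxEven l)).sum = l.sum := by
  by_cases h : maxEven l ∈ l
  · exact sum_erase h
  · have h0 : maxEven l = 0 := by
      by_contra h0
      exact h (mem_of_mem_filter (maxEven_mem_filter h0))
    rw [erase_of_notMem h, h0, zero_add]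

end maxEven

section minOdd

lemma minOdd_le (ha : a ∈ l) (hodd : Odd a) : minOdd l ≤ a :=
  Nat.sInf_le ⟨ha, hodd⟩

lemma minOdd_mem (h : ∃ a ∈ l, Odd a) : minOdd l ∈ l ∧ Odd (minOdd l) :=
  Nat.sInf_mem h

lemma minOdd_eq (ha : a ∈ l) (hodd : Odd a) (hmin : ∀ b ∈ l, Odd b → a ≤ b) :
    minOdd l = a :=
  IsLeast.csInf_eq ⟨⟨ha, hodd⟩, fun b hb => hmin b hb.1 hb.2⟩

lemma lt_minOdd_of_even (hl : oddAbove l) (h : ∃ a ∈ l, Odd a) (hb : b ∈ l) (hev : Even b) :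
    b < minOdd l :=
  hl _ (minOdd_mem h).1 b hb (minOdd_mem h).2 hev

end minOdd

section raiseMaxEven

lemma raiseMaxEven_of_forall_odd (h : ∀ a ∈ l, Odd a) : raiseMaxEven l = 1 ::ₘ l := by
  rw [raiseMaxEven, maxEven_eq_zero_of_forall_odd h,
    erase_of_notMem fun h0 => Nat.not_odd_zero (h 0 h0)]

lemma raiseMaxEven_eq (hb : b ∈ l) (hev : Even b) (hmax : ∀ c ∈ l, Even c → c ≤ b) :
    raiseMaxEven l = (b + 1) ::ₘ l.erase b := by
  rw [raiseMaxEven, maxEven_eq hb hev hmax]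

lemma sum_raiseMaxEven (l : Multiset ℕ) : (raiseMaxEven l).sum = l.sum + 1 := by
  rw [raiseMaxEven, sum_cons, ← maxEven_add_sum_erase l]
  ring

lemma pos_of_mem_raiseMaxEven (hpos : ∀ a ∈ l, 0 < a) (ha : a ∈ raiseMaxEven l) : 0 < a := by
  rcases mem_cons.1 ha with rfl | ha
  · exact Nat.succ_pos _
  · exact hpos a (mem_of_mem_erase ha)

lemma maxEven_lt_of_odd_mem_raiseMaxEven (hl : oddAbove l) (ha : a ∈ raiseMaxEven l)
    (hodd : Odd a) : maxEven l < a := by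
  rcases mem_cons.1 ha with rfl | ha
  · exact Nat.lt_succ_self _
  · exact maxEven_lt_of_odd hl (mem_of_mem_erase ha) hodd

lemma oddAbove_raiseMaxEven (hl : oddAbove l) : oddAbove (raiseMaxEven l) := by
  intro a ha b hb hodd hev
  have hbl : b ∈ l := by
    rcases mem_cons.1 hb with rfl | hb
    · exact absurd hev (Nat.not_even_iff_odd.2 (even_maxEven l).add_one)
    · exact mem_of_mem_erase hb
  exact (le_maxEven hbl hev).trans_lt (maxEven_lt_of_odd_mem_raiseMaxEven hl ha hodd)

lemma minOdd_raiseMaxEven (hl : oddAbove l) : minOdd (raiseMaxEven l) = maxEven l + 1 :=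
  minOdd_eq (mem_cons_self _ _) (even_maxEven l).add_one fun _ hb hodd =>
    maxEven_lt_of_odd_mem_raiseMaxEven hl hb hodd

lemma lowerMinOdd_raiseMaxEven (hpos : ∀ a ∈ l, 0 < a) (hl : oddAbove l) :
    lowerMinOdd (raiseMaxEven l) = l := by
  rw [lowerMinOdd, minOdd_raiseMaxEven hl, raiseMaxEven]
  by_cases h : maxEven l = 0
  · rw [if_pos (by rw [h]), h, erase_cons_head, erase_of_notMem fun h0 => (hpos 0 h0).false]
  · rw [if_neg (by omega), erase_cons_head, Nat.add_sub_cancel,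
      cons_erase (mem_of_mem_filter (maxEven_mem_filter h))]

end raiseMaxEven

section lowerMinOdd

variable (h : ∃ a ∈ l, Odd a)
include h

lemma lowerMinOdd_sum_add_one : (lowerMinOdd l).sum + 1 = l.sum := by
  obtain ⟨hmem, hodd⟩ := minOdd_mem h
  have hsum := sum_erase hmem
  have := hodd.pos
  unfold lowerMinOdd
  split_ifs with h1
  · rw [h1] at hsum; omega
  · rw [sum_cons]; omega

lemma mem_lowerMinOdd (ha : a ∈ lowerMinOdd l) :
    a ∈ l ∨ (a = minOdd l - 1 ∧ 1 < minOdd l) := by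
  have := (minOdd_mem h).2.pos
  unfold lowerMinOdd at ha
  split_ifs at ha with h1
  · exact .inl (mem_of_mem_erase ha)
  · rcases mem_cons.1 ha with rfl | ha
    · exact .inr ⟨rfl, by omega⟩
    · exact .inl (mem_of_mem_erase ha)

lemma pos_of_mem_lowerMinOdd (hpos : ∀ a ∈ l, 0 < a) (ha : a ∈ lowerMinOdd l) : 0 < a := by
  rcases mem_lowerMinOdd h ha with ha | ⟨rfl, h1⟩
  · exact hpos a ha
  · omega

lemma mem_of_odd_mem_lowerMinOdd (ha : a ∈ lowerMinOdd l) (hodd : Odd a) : a ∈ l := by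
  rcases mem_lowerMinOdd h ha with ha | ⟨rfl, -⟩
  · exact ha
  · exact absurd (Nat.Odd.sub_odd (minOdd_mem h).2 odd_one) (Nat.not_even_iff_odd.2 hodd)

lemma lt_minOdd_of_even_mem_lowerMinOdd (hl : oddAbove l) (hb : b ∈ lowerMinOdd l)
    (hev : Even b) : b < minOdd l := by
  rcases mem_lowerMinOdd h hb with hb | ⟨rfl, h1⟩
  · exact lt_minOdd_of_even hl h hb hev
  · omega

lemma oddAbove_lowerMinOdd (hl : oddAbove l) : oddAbove (lowerMinOdd l) := fun _ ha _ hb hodd hev =>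
  (lt_minOdd_of_even_mem_lowerMinOdd h hl hb hev).trans_le
    (minOdd_le (mem_of_odd_mem_lowerMinOdd h ha hodd) hodd)

lemma maxEven_lowerMinOdd (hl : oddAbove l) : maxEven (lowerMinOdd l) = minOdd l - 1 := by
  refine le_antisymm (maxEven_le fun b hb hev => ?_) ?_
  · have := lt_minOdd_of_even_mem_lowerMinOdd h hl hb hev
    omega
  · unfold lowerMinOdd
    split_ifs with h1
    · omega
    · exact le_maxEven (mem_cons_self _ _) (Nat.Odd.sub_odd (minOdd_mem h).2 odd_one)

lemma raiseMaxEven_lowerMinOdd (hpos : ∀ a ∈ l, 0 < a) (hl : oddAbove l) :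
    raiseMaxEven (lowerMinOdd l) = l := by
  obtain ⟨hmem, hodd⟩ := minOdd_mem h
  rw [raiseMaxEven, maxEven_lowerMinOdd h hl, Nat.sub_add_cancel hodd.pos]
  unfold lowerMinOdd
  split_ifs with h1
  · rw [h1, Nat.sub_self, erase_of_notMem fun h0 => (hpos 0 (mem_of_mem_erase h0)).false,
      cons_erase (h1 ▸ hmem)]
  · rw [erase_cons_head, cons_erase hmem]

end lowerMinOdd

def raiseMaxEvenPartition {n : ℕ} (p : {p : n.Partition // oddAbove p.parts}) :
    {p : (n + 1).Partition // oddAbove p.parts} :=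
  ⟨⟨raiseMaxEven p.1.parts, pos_of_mem_raiseMaxEven (fun _ => p.1.parts_pos),
    by rw [sum_raiseMaxEven, p.1.parts_sum]⟩, oddAbove_raiseMaxEven p.2⟩

noncomputable def lowerMinOddPartition {n : ℕ} (hn : Even n)
    (q : {q : (n + 1).Partition // oddAbove q.parts}) : {p : n.Partition // oddAbove p.parts} :=
  have h := q.1.exists_odd_mem hn.add_one
  ⟨⟨lowerMinOdd q.1.parts, pos_of_mem_lowerMinOdd h (fun _ => q.1.parts_pos),
    by have := lowerMinOdd_sum_add_one h; rw [q.1.parts_sum] at this; omega⟩,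
    oddAbove_lowerMinOdd h q.2⟩

theorem stmt17_general (n : ℕ) (hne : Even n) :
    ∃ ψ : {p : Nat.Partition n // oddAbove p.parts} →
        {p : Nat.Partition (n + 1) // oddAbove p.parts},
      Function.Bijective ψ ∧
        ∀ p : {p : Nat.Partition n // oddAbove p.parts},
          ((∀ a ∈ p.1.parts, Odd a) → (ψ p).1.parts = 1 ::ₘ p.1.parts) ∧
          (∀ e ∈ p.1.parts, Even e → (∀ b ∈ p.1.parts, Even b → b ≤ e) →
            (ψ p).1.parts = (e + 1) ::ₘ p.1.parts.erase e) := by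
  refine ⟨raiseMaxEvenPartition, Function.bijective_iff_has_inverse.2
    ⟨lowerMinOddPartition hne, fun p => ?_, fun q => ?_⟩,
    fun p => ⟨raiseMaxEven_of_forall_odd, fun _ => raiseMaxEven_eq⟩⟩
  · exact Subtype.ext <| Nat.Partition.ext <|
      lowerMinOdd_raiseMaxEven (fun _ => p.1.parts_pos) p.2
  · exact Subtype.ext <| Nat.Partition.ext <|
      raiseMaxEven_lowerMinOdd (q.1.exists_odd_mem hne.add_one) (fun _ => q.1.parts_pos) q.2

theorem stmt17 (n : ℕ) (hn : 2 ≤ n) (hne : Even n) :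
    ∃ ψ : {p : Nat.Partition n // oddAbove p.parts} →
        {p : Nat.Partition (n + 1) // oddAbove p.parts},
      Function.Bijective ψ ∧
        ∀ p : {p : Nat.Partition n // oddAbove p.parts},
          ((∀ a ∈ p.1.parts, Odd a) → (ψ p).1.parts = 1 ::ₘ p.1.parts) ∧
          (∀ e ∈ p.1.parts, Even e → (∀ b ∈ p.1.parts, Even b → b ≤ e) →
            (ψ p).1.parts = (e + 1) ::ₘ p.1.parts.erase e) :=
  stmt17_general n hne
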